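/- arXiv:1906.02800 — 3 statements merged into one kernel-verified Lean document; each statement's English description precedes it below -/
import Mathlib

section
/- Let h : ℝ^n → ℝ satisfy h(x+e) + h(x−e) − 2h(x) ≤ 0 for all x ∈ ℝ^n and all e in the integer lattice E = {k₁e₁+⋯+kₙeₙ : kᵢ ∈ ℤ, not all zero}, and suppose |h| ≤ C₀ on [−1,1]^n. Define M_m = sup over [−m,m]^n of h, for positive integers m. Then M_m ≤ 2·M_{⌊(m+1)/2⌋+1} + C₀ for every positive integer m. -/
/-!
Write a point `x` of `[-m, m]ⁿ` as `x = 2k + z` with `k` a lattice vector and `z ∈ [-1, 1]ⁿ`;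
then the midpoint `x - k` of `x` and `z` lies in `[-(m+1)/2, (m+1)/2]ⁿ`. Concavity along the
lattice direction `k` gives `h x + h (x - 2k) ≤ 2 h (x - k)`, and `-h (x - 2k) ≤ C₀`.
-/

open Set

namespace EuclideanLattice

variable {n : ℕ}

def cube (n : ℕ) (a : ℝ) : Set (EuclideanSpace ℝ (Fin n)) := {x | ∀ i, |x i| ≤ a}

def latticePoint (k : Fin n → ℤ) : EuclideanSpace ℝ (Fin n) :=
  (WithLp.equiv 2 (Fin n → ℝ)).symm fun i => (k i : ℝ)

@[simp]
lemma latticePoint_apply (k : Fin n → ℤ) (i : Fin n) : latticePoint k i = k i := rfl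

lemma cube_mono {a b : ℝ} (hab : a ≤ b) : cube n a ⊆ cube n b :=
  fun _ hx i => (hx i).trans hab

lemma zero_mem_cube {a : ℝ} (ha : 0 ≤ a) : (0 : EuclideanSpace ℝ (Fin n)) ∈ cube n a :=
  fun i => by simpa using ha

lemma exists_latticePoint_sub_mem_cube {a : ℝ} {x : EuclideanSpace ℝ (Fin n)}
    (hx : x ∈ cube n a) :
    ∃ k : Fin n → ℤ, x - 2 • latticePoint k ∈ cube n 1 ∧
      x - latticePoint k ∈ cube n ((a + 1) / 2) := by
  refine ⟨fun i => ⌊(x i + 1) / 2⌋, fun i => ?_, fun i => ?_⟩ <;>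
  · have hlo := Int.floor_le ((x i + 1) / 2)
    have hhi := Int.lt_floor_add_one ((x i + 1) / 2)
    have hxi := abs_le.mp (hx i)
    simp only [PiLp.sub_apply, PiLp.smul_apply, latticePoint_apply, nsmul_eq_mul, Nat.cast_ofNat]
    rw [abs_le]
    constructor <;> linarith

end EuclideanLattice

open EuclideanLattice

def IsLatticeConcave {n : ℕ} (h : EuclideanSpace ℝ (Fin n) → ℝ) : Prop :=
  ∀ k : Fin n → ℤ, k ≠ 0 → ∀ x,
    h (x + latticePoint k) + h (x - latticePoint k) - 2 * h x ≤ 0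

namespace IsLatticeConcave

variable {n : ℕ} {h : EuclideanSpace ℝ (Fin n) → ℝ}

lemma add_sub_two_nsmul_le (hconc : IsLatticeConcave h) (k : Fin n → ℤ)
    (x : EuclideanSpace ℝ (Fin n)) :
    h x + h (x - 2 • latticePoint k) ≤ 2 * h (x - latticePoint k) := by
  rcases eq_or_ne k 0 with rfl | hk
  · have h0 : latticePoint (0 : Fin n → ℤ) = 0 := by ext; simp
    simp only [h0, smul_zero, sub_zero]
    linarith
  · have := hconc k hk (x - latticePoint k)
    rw [sub_add_cancel, sub_sub, ← two_nsmul] at this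
    linarith

lemma exists_le_two_mul_add (hconc : IsLatticeConcave h) {C₀ a : ℝ}
    (hbd : ∀ x ∈ cube n 1, |h x| ≤ C₀) {x : EuclideanSpace ℝ (Fin n)} (hx : x ∈ cube n a) :
    ∃ y ∈ cube n ((a + 1) / 2), h x ≤ 2 * h y + C₀ := by
  obtain ⟨k, hfar, hmid⟩ := exists_latticePoint_sub_mem_cube hx
  refine ⟨_, hmid, ?_⟩
  have := (abs_le.mp (hbd _ hfar)).1
  linarith [hconc.add_sub_two_nsmul_le k x]

end IsLatticeConcave

lemma csSup_image_le_two_mul_add {α : Type*} {f : α → ℝ} {s t : Set α} {C : ℝ}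
    (hs : s.Nonempty) (ht : BddAbove (f '' t)) (H : ∀ x ∈ s, ∃ y ∈ t, f x ≤ 2 * f y + C) :
    sSup (f '' s) ≤ 2 * sSup (f '' t) + C :=
  csSup_le (hs.image f) <| forall_mem_image.2 fun x hx =>
    let ⟨y, hy, hxy⟩ := H x hx
    hxy.trans (by gcongr; exact le_csSup ht (mem_image_of_mem f hy))

theorem stmt_4_general {n : ℕ} (h : EuclideanSpace ℝ (Fin n) → ℝ) (C₀ : ℝ)
    (hconc : ∀ (k : Fin n → ℤ), k ≠ 0 → ∀ x : EuclideanSpace ℝ (Fin n),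
      h (x + ((WithLp.equiv 2 (Fin n → ℝ)).symm (fun i => (k i : ℝ)))) + h (x - ((WithLp.equiv 2 (Fin n → ℝ)).symm (fun i => (k i : ℝ)))) - 2 * h x ≤ 0)
    (hbd : ∀ x : EuclideanSpace ℝ (Fin n), (∀ i, |x i| ≤ 1) → |h x| ≤ C₀)
    (m : ℕ) :
    sSup (h '' {x : EuclideanSpace ℝ (Fin n) | ∀ i, |x i| ≤ (m : ℝ)})
      ≤ 2 * sSup (h '' {x : EuclideanSpace ℝ (Fin n) |
          ∀ i, |x i| ≤ (((m + 1) / 2 + 1 : ℕ) : ℝ)}) + C₀ := by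
  change sSup (h '' cube n m) ≤ 2 * sSup (h '' cube n ((m + 1) / 2 + 1 : ℕ)) + C₀
  set r : ℕ := (m + 1) / 2 + 1
  have hC₀ : 0 ≤ C₀ := (abs_nonneg _).trans (hbd 0 (zero_mem_cube zero_le_one))
  by_cases hbdd : BddAbove (h '' cube n r)
  · have hmr : ((m : ℝ) + 1) / 2 ≤ r := by
      rw [div_le_iff₀ two_pos]; exact_mod_cast (by omega : m + 1 ≤ r * 2)
    refine csSup_image_le_two_mul_add ⟨0, zero_mem_cube m.cast_nonneg⟩ hbdd fun x hx => ?_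
    obtain ⟨y, hy, hxy⟩ := IsLatticeConcave.exists_le_two_mul_add hconc hbd hx
    exact ⟨y, cube_mono hmr hy, hxy⟩
  -- `sSup` of a set unbounded above is `0`, so the right-hand side is just `C₀`.
  rw [Real.sSup_of_not_bddAbove hbdd, mul_zero, zero_add]
  rcases le_or_gt m 1 with hm1 | hm2
  · refine Real.sSup_le (forall_mem_image.2 fun x hx => ?_) hC₀
    exact (le_abs_self _).trans (hbd x (cube_mono (by exact_mod_cast hm1) hx))
  · have hrm : cube n r ⊆ cube n m := cube_mono (by exact_mod_cast (by omega : r ≤ m))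
    rw [Real.sSup_of_not_bddAbove fun hb => hbdd (hb.mono (image_mono hrm))]
    exact hC₀

/-- If `h` is concave along the integer lattice and `|h| ≤ C₀` on `[-1,1]ⁿ`, then
`M_m ≤ 2 M_{⌊(m+1)/2⌋+1} + C₀`, where `M_m = sup_{[-m,m]ⁿ} h`. -/
theorem stmt_4 {n : ℕ} (h : EuclideanSpace ℝ (Fin n) → ℝ) (C₀ : ℝ)
    (hconc : ∀ (k : Fin n → ℤ), k ≠ 0 → ∀ x : EuclideanSpace ℝ (Fin n),
      h (x + ((WithLp.equiv 2 (Fin n → ℝ)).symm (fun i => (k i : ℝ)))) + h (x - ((WithLp.equiv 2 (Fin n → ℝ)).symm (fun i => (k i : ℝ)))) - 2 * h x ≤ 0)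
    (hbd : ∀ x : EuclideanSpace ℝ (Fin n), (∀ i, |x i| ≤ 1) → |h x| ≤ C₀)
    (m : ℕ) (hm : 0 < m) :
    sSup (h '' {x : EuclideanSpace ℝ (Fin n) | ∀ i, |x i| ≤ (m : ℝ)})
      ≤ 2 * sSup (h '' {x : EuclideanSpace ℝ (Fin n) |
          ∀ i, |x i| ≤ (((m + 1) / 2 + 1 : ℕ) : ℝ)}) + C₀ :=
  stmt_4_general h C₀ hconc hbd m
end

section
/- Consequently, under the same assumptions (h lattice-concave, |h| ≤ C₀ on [−1,1]^n, M_m = sup_{[−m,m]^n} h), there is a constant C depending only on C₀ such that M_{2^i} ≤ 4·M_{2^{i−1}} + C for all integers i ≥ 1. -/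
lemma aux_round2 (t : ℝ) : |t - 2 * (round (t/2) : ℝ)| ≤ 1 := by
  have h := abs_sub_round (t/2)
  rw [abs_sub_le_iff] at h ⊢
  constructor <;> nlinarith [h.1, h.2]

lemma aux_round1 (m : ℤ) (t : ℝ) (ht : |t| ≤ 2*(m:ℝ)) :
    |t - (round (t/2) : ℝ)| ≤ (m:ℝ) := by
  have hr := abs_sub_round (t/2)
  rw [abs_sub_le_iff] at hr
  rw [abs_le] at ht ⊢
  constructor
  · rcases le_or_gt (-(2*(m:ℝ)) + 1) t with hc | hc
    · linarith [hr.1, hr.2]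
    · have hfl : round (t/2) = -m := by
        rw [round_eq, Int.floor_eq_iff]
        constructor
        · push_cast; linarith [ht.1]
        · push_cast; linarith
      rw [hfl]; push_cast; linarith [ht.1]
  · rcases le_or_gt t (2*(m:ℝ) - 1) with hc | hc
    · linarith [hr.1, hr.2]
    · have hfl : round (t/2) = m := by
        rw [round_eq, Int.floor_eq_iff]
        constructor
        · linarith
        · linarith [ht.2]
      rw [hfl]; linarith [ht.2]

lemma aux_round_ne (t : ℝ) (ht : 1 < |t|) : round (t/2) ≠ 0 := by
  intro h0
  have h := abs_sub_round (t/2)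
  rw [h0] at h
  simp only [Int.cast_zero, sub_zero] at h
  rw [abs_le] at h
  rcases lt_abs.mp ht with h1 | h1 <;> linarith

lemma step_lemma {n : ℕ} (h : EuclideanSpace ℝ (Fin n) → ℝ) (C₀ : ℝ)
    (hconc : ∀ (k : Fin n → ℤ), k ≠ 0 → ∀ x : EuclideanSpace ℝ (Fin n),
      h (x + ((WithLp.equiv 2 (Fin n → ℝ)).symm (fun i => (k i : ℝ)))) + h (x - ((WithLp.equiv 2 (Fin n → ℝ)).symm (fun i => (k i : ℝ)))) - 2 * h x ≤ 0)
    (hbd : ∀ x : EuclideanSpace ℝ (Fin n), (∀ i, |x i| ≤ 1) → |h x| ≤ C₀)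
    (m : ℤ) (B : ℝ)
    (hB : ∀ x : EuclideanSpace ℝ (Fin n), (∀ j, |x j| ≤ (m:ℝ)) → h x ≤ B) :
    ∀ z : EuclideanSpace ℝ (Fin n), (∀ j, |z j| ≤ 2*(m:ℝ)) →
      h z ≤ max C₀ (2*B + C₀) := by
  intro z hz
  by_cases hz1 : ∀ j, |z j| ≤ 1
  · exact le_trans (le_trans (le_abs_self _) (hbd z hz1)) (le_max_left _ _)
  · push_neg at hz1
    obtain ⟨j₀, hj₀⟩ := hz1
    set e : Fin n → ℤ := fun j => round (z j / 2) with he_def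
    have he : e ≠ 0 := by
      intro h0
      have : e j₀ = 0 := by rw [h0]; rfl
      exact aux_round_ne (z j₀) hj₀ this
    set v : EuclideanSpace ℝ (Fin n) :=
      (WithLp.equiv 2 (Fin n → ℝ)).symm (fun j => (e j : ℝ)) with hv
    have key := hconc e he (z - v)
    rw [sub_add_cancel] at key
    have hvj : ∀ j, v j = (e j : ℝ) := fun j => rfl
    have h1 : h (z - v) ≤ B := by
      apply hB
      intro j
      have hcoord : (z - v) j = z j - (e j : ℝ) := by
        simp [hvj j]
      rw [hcoord]
      exact aux_round1 m (z j) (hz j)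
    have h2 : -C₀ ≤ h (z - v - v) := by
      have hb : |h (z - v - v)| ≤ C₀ := by
        apply hbd
        intro j
        have hcoord : (z - v - v) j = z j - (e j : ℝ) - (e j : ℝ) := by
          simp [hvj j]
        rw [hcoord]
        have : z j - (e j : ℝ) - (e j : ℝ) = z j - 2 * (e j : ℝ) := by ring
        rw [this]
        exact aux_round2 (z j)
      linarith [neg_abs_le (h (z - v - v)), (abs_le.mp hb).2]
    refine le_trans ?_ (le_max_right _ _)
    linarith

lemma bdd_lemma {n : ℕ} (h : EuclideanSpace ℝ (Fin n) → ℝ) (C₀ : ℝ)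
    (hconc : ∀ (k : Fin n → ℤ), k ≠ 0 → ∀ x : EuclideanSpace ℝ (Fin n),
      h (x + ((WithLp.equiv 2 (Fin n → ℝ)).symm (fun i => (k i : ℝ)))) + h (x - ((WithLp.equiv 2 (Fin n → ℝ)).symm (fun i => (k i : ℝ)))) - 2 * h x ≤ 0)
    (hbd : ∀ x : EuclideanSpace ℝ (Fin n), (∀ i, |x i| ≤ 1) → |h x| ≤ C₀) :
    ∀ i : ℕ, ∃ B : ℝ, ∀ x : EuclideanSpace ℝ (Fin n),
      (∀ j, |x j| ≤ ((2^i : ℕ) : ℝ)) → h x ≤ B := by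
  intro i
  induction i with
  | zero =>
    refine ⟨C₀, fun x hx => ?_⟩
    have : ∀ j, |x j| ≤ 1 := by intro j; simpa using hx j
    exact le_trans (le_abs_self _) (hbd x this)
  | succ i ih =>
    obtain ⟨B, hB⟩ := ih
    refine ⟨max C₀ (2*B + C₀), fun x hx => ?_⟩
    have hB' : ∀ y : EuclideanSpace ℝ (Fin n),
        (∀ j, |y j| ≤ ((2^i : ℤ) : ℝ)) → h y ≤ B := by
      intro y hy
      apply hB
      intro j
      have := hy j
      push_cast at this ⊢
      linarith
    apply step_lemma h C₀ hconc hbd (2^i : ℤ) B hB' x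
    intro j
    have := hx j
    push_cast at this ⊢
    rw [pow_succ] at this
    linarith [this]

/-- Under lattice concavity and boundedness on `[-1,1]ⁿ`, there is a constant `C`
depending only on `C₀` with `M_{2^i} ≤ 4 M_{2^{i-1}} + C` for all `i ≥ 1`. -/
theorem stmt_5 {n : ℕ} (h : EuclideanSpace ℝ (Fin n) → ℝ) (C₀ : ℝ)
    (hconc : ∀ (k : Fin n → ℤ), k ≠ 0 → ∀ x : EuclideanSpace ℝ (Fin n),
      h (x + ((WithLp.equiv 2 (Fin n → ℝ)).symm (fun i => (k i : ℝ)))) + h (x - ((WithLp.equiv 2 (Fin n → ℝ)).symm (fun i => (k i : ℝ)))) - 2 * h x ≤ 0)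
    (hbd : ∀ x : EuclideanSpace ℝ (Fin n), (∀ i, |x i| ≤ 1) → |h x| ≤ C₀) :
    ∃ C : ℝ, ∀ i : ℕ, 1 ≤ i →
      sSup (h '' {x : EuclideanSpace ℝ (Fin n) | ∀ j, |x j| ≤ ((2^i : ℕ) : ℝ)})
        ≤ 4 * sSup (h '' {x : EuclideanSpace ℝ (Fin n) |
            ∀ j, |x j| ≤ ((2^(i-1) : ℕ) : ℝ)}) + C := by
  have hC₀ : 0 ≤ C₀ := by
    have := hbd 0 (fun j => by simp)
    exact le_trans (abs_nonneg _) this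
  refine ⟨5 * C₀, fun i hi => ?_⟩
  set Sbig : Set (EuclideanSpace ℝ (Fin n)) :=
    {x | ∀ j, |x j| ≤ ((2^i : ℕ) : ℝ)} with hSbig
  set Ssmall : Set (EuclideanSpace ℝ (Fin n)) :=
    {x | ∀ j, |x j| ≤ ((2^(i-1) : ℕ) : ℝ)} with hSsmall
  -- boundedness above on the small cube
  obtain ⟨B₀, hB₀⟩ := bdd_lemma h C₀ hconc hbd (i-1)
  have hbdd : BddAbove (h '' Ssmall) := by
    refine ⟨B₀, ?_⟩
    rintro y ⟨x, hx, rfl⟩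
    exact hB₀ x hx
  have hne : (h '' Ssmall).Nonempty := ⟨h 0, 0, fun j => by simp, rfl⟩
  set M : ℝ := sSup (h '' Ssmall) with hM
  have hMge : -C₀ ≤ M := by
    have h0mem : h 0 ∈ h '' Ssmall := ⟨0, fun j => by simp, rfl⟩
    have := le_csSup hbdd h0mem
    have h0bd := hbd 0 (fun j => by simp)
    linarith [(abs_le.mp h0bd).1]
  have hle : ∀ x ∈ Ssmall, h x ≤ M := fun x hx => le_csSup hbdd ⟨x, hx, rfl⟩
  -- pointwise bound on big cube
  have hpt : ∀ z ∈ Sbig, h z ≤ max C₀ (2*M + C₀) := by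
    intro z hz
    apply step_lemma h C₀ hconc hbd (2^(i-1) : ℤ) M
    · intro x hx
      apply hle
      intro j
      have := hx j
      push_cast at this ⊢
      linarith
    · intro j
      have := hz j
      have h2i : (i - 1) + 1 = i := Nat.succ_pred_eq_of_pos hi
      rw [← h2i] at this
      push_cast at this ⊢
      rw [pow_succ] at this
      linarith
  have hbigne : (h '' Sbig).Nonempty := ⟨h 0, 0, fun j => by simp, rfl⟩
  have hsup : sSup (h '' Sbig) ≤ max C₀ (2*M + C₀) := by
    apply csSup_le hbigne
    rintro y ⟨x, hx, rfl⟩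
    exact hpt x hx
  refine le_trans hsup ?_
  rw [max_le_iff]
  constructor <;> linarith
end

section
/- Let Q(x) = ½xᵀAx with A symmetric positive definite, let e ∈ ℝ^n be nonzero, and suppose u_λ : B₂ → ℝ (λ ≥ 1) converge to Q in C¹(B₂) as λ → ∞. Set ê = e/λ. Then ∫_{B₁} Δ²_ê u_λ(x) dx → (eᵀAe/‖e‖²)·|B₁| as λ → ∞. -/
/-!
Write `u_λ = Q + v_λ`. The second difference of `Q` in direction `h` is the constant `hᵀAh`, so
`Q` contributes exactly `(eᵀAe/‖e‖²)·|B₁|`, and it remains to show `‖h‖⁻² ∫_{B₁} Δ²_h v_λ → 0`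
when `Dv_λ → 0` uniformly on `B₂`. With `w(x) = v(x) - v(x - h)` one has
`Δ²_h v(x) = w(x + h) - w(x)`, so after a translation
`∫_{B₁} Δ²_h v = ∫_{B(h,1) \ B₁} w - ∫_{B₁ \ B(h,1)} w`. Both sets lie in the annulus
`1 - ‖h‖ < ‖x‖ < 1 + ‖h‖`, of measure `O(‖h‖)`, on which `|w| ≤ sup ‖Dv‖ · ‖h‖`; hence the integral
is `O(sup ‖Dv‖ · ‖h‖²)`.
-/

open scoped NNReal
open MeasureTheory Metric Filter Topology

def secondDiff {E : Type*} [AddGroup E] (f : E → ℝ) (h x : E) : ℝ :=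
  f (x + h) + f (x - h) - 2 * f x

theorem setIntegral_sub_setIntegral {X F : Type*} [MeasurableSpace X] [NormedAddCommGroup F]
    [NormedSpace ℝ F] {μ : Measure X} {f : X → F} {s t : Set X} (hs : MeasurableSet s)
    (ht : MeasurableSet t) (hf : IntegrableOn f (s ∪ t) μ) :
    ∫ x in s, f x ∂μ - ∫ x in t, f x ∂μ = ∫ x in s \ t, f x ∂μ - ∫ x in t \ s, f x ∂μ := by
  have hs' := integral_inter_add_sdiff ht (hf.mono_set Set.subset_union_left)
  have ht' := integral_inter_add_sdiff hs (hf.mono_set Set.subset_union_right)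
  rw [Set.inter_comm] at ht'
  rw [← hs', ← ht']
  abel

theorem one_add_pow_sub_one_sub_pow_le (d : ℕ) {t : ℝ} (ht₀ : 0 ≤ t) (ht₁ : t ≤ 1) :
    (1 + t) ^ d - (1 - t) ^ d ≤ 2 * d * 2 ^ d * t := by
  calc (1 + t) ^ d - (1 - t) ^ d ≤ |(1 + t) ^ d - (1 - t) ^ d| := le_abs_self _
    _ ≤ |(1 + t) - (1 - t)| * d * max |1 + t| |1 - t| ^ (d - 1) := abs_pow_sub_pow_le _ _ _
    _ ≤ (2 * t) * d * 2 ^ d := by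
        rw [show (1 + t) - (1 - t) = 2 * t by ring, abs_of_nonneg (by positivity)]
        gcongr
        calc max |1 + t| |1 - t| ^ (d - 1) ≤ 2 ^ (d - 1) := by
              gcongr
              rw [abs_of_nonneg (by linarith), abs_of_nonneg (by linarith)]
              exact max_le (by linarith) (by linarith)
          _ ≤ 2 ^ d := pow_le_pow_right₀ (by norm_num) (Nat.sub_le d 1)
    _ = 2 * d * 2 ^ d * t := by ring

theorem ball_sdiff_ball_subset {X : Type*} [PseudoMetricSpace X] {a b c : X} {r t : ℝ}
    (hac : dist a c ≤ t) (hbc : dist b c ≤ t) :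
    ball a r \ ball b r ⊆ ball c (r + t) \ ball c (r - t) := by
  rintro x ⟨hxa, hxb⟩
  rw [mem_ball] at hxa hxb
  refine ⟨?_, ?_⟩
  · rw [mem_ball]
    linarith [dist_triangle x a c]
  · rw [mem_ball]
    linarith [dist_triangle x c b, dist_comm b c]

theorem setIntegral_ball_comp_add_sub {G : Type*} [NormedAddCommGroup G] [MeasurableSpace G]
    [BorelSpace G] (μ : Measure G) [μ.IsAddRightInvariant] (f : G → ℝ) (a h : G) (r : ℝ)
    (hf : IntegrableOn f (ball a r ∪ ball (a + h) r) μ) :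
    ∫ x in ball a r, (f (x + h) - f x) ∂μ =
      ∫ x in ball (a + h) r \ ball a r, f x ∂μ - ∫ x in ball a r \ ball (a + h) r, f x ∂μ := by
  have hpre : (fun x => x + h) ⁻¹' ball (a + h) r = ball a r := by simp
  have hmp := measurePreserving_add_right μ h
  have hemb := measurableEmbedding_addRight h
  have hshift : ∫ x in ball a r, f (x + h) ∂μ = ∫ x in ball (a + h) r, f x ∂μ := by
    rw [← hpre, hmp.setIntegral_preimage_emb hemb]
  have hshift_int : IntegrableOn (fun x => f (x + h)) (ball a r) μ := by
    rw [← hpre]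
    exact (hmp.integrableOn_comp_preimage hemb).2 (hf.mono_set Set.subset_union_right)
  rw [integral_sub hshift_int (hf.mono_set Set.subset_union_left), hshift,
    setIntegral_sub_setIntegral measurableSet_ball measurableSet_ball (Set.union_comm _ _ ▸ hf)]

section Haar

variable {E : Type*} [NormedAddCommGroup E] [NormedSpace ℝ E] [FiniteDimensional ℝ E]
  [MeasurableSpace E] [BorelSpace E] (μ : Measure E) [μ.IsAddHaarMeasure]

theorem measureReal_ball_sdiff_ball_le (x : E) {t : ℝ} (ht₀ : 0 ≤ t) (ht₁ : t < 1) :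
    μ.real (ball x (1 + t) \ ball x (1 - t)) ≤
      2 * Module.finrank ℝ E * 2 ^ Module.finrank ℝ E * t * μ.real (ball 0 1) := by
  rw [measureReal_sdiff (ball_subset_ball (by linarith)) measurableSet_ball,
    measureReal_def, measureReal_def, measureReal_def,
    Measure.addHaar_ball_of_pos μ x (by linarith : (0 : ℝ) < 1 + t),
    Measure.addHaar_ball_of_pos μ x (by linarith : (0 : ℝ) < 1 - t),
    ENNReal.toReal_mul, ENNReal.toReal_mul, ENNReal.toReal_ofReal (by positivity),
    ENNReal.toReal_ofReal (pow_nonneg (by linarith) _), ← sub_mul]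
  gcongr
  exact one_add_pow_sub_one_sub_pow_le _ ht₀ ht₁.le

theorem integrableOn_secondDiff_ball {v : E → ℝ} (hv : ContinuousOn v (ball 0 2)) {h : E}
    (hh : ‖h‖ < 1) : IntegrableOn (secondDiff v h) (ball 0 1) μ := by
  refine IntegrableOn.mono_set ?_ ball_subset_closedBall
  refine ContinuousOn.integrableOn_compact (isCompact_closedBall 0 1) ?_
  have hmaps : ∀ k : E, ‖k‖ < 1 → Set.MapsTo (· + k) (closedBall 0 1) (ball 0 2) := by
    intro k hk x hx
    rw [mem_closedBall_zero_iff] at hx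
    rw [mem_ball_zero_iff]
    linarith [norm_add_le x k]
  have hsub : closedBall (0 : E) 1 ⊆ ball 0 2 := closedBall_subset_ball (by norm_num)
  have hplus : ContinuousOn (fun x => v (x + h)) (closedBall 0 1) :=
    hv.comp (by fun_prop) (hmaps h hh)
  have hminus : ContinuousOn (fun x => v (x - h)) (closedBall 0 1) := by
    simpa only [Function.comp_def, sub_eq_add_neg] using
      hv.comp (by fun_prop) (hmaps (-h) (by rwa [norm_neg]))
  exact (hplus.add hminus).sub (continuousOn_const.mul (hv.mono hsub))

theorem abs_integral_secondDiff_ball_le {K : ℝ≥0} {v : E → ℝ}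
    (hv : LipschitzOnWith K v (ball 0 2)) {h : E} (hh : ‖h‖ < 1 / 2) :
    |∫ x in ball 0 1, secondDiff v h x ∂μ| ≤
      4 * Module.finrank ℝ E * 2 ^ Module.finrank ℝ E * K * ‖h‖ ^ 2 * μ.real (ball 0 1) := by
  set t := ‖h‖ with ht
  set w : E → ℝ := fun x => v x - v (x - h)
  have hsd : Set.EqOn (secondDiff v h) (fun x => w (x + h) - w x) (ball 0 1) := by
    intro x _
    simp only [secondDiff, w, add_sub_cancel_right]
    ring
  have hmem : ∀ x : E, ‖x‖ ≤ 1 + t → x ∈ ball 0 2 ∧ x - h ∈ ball 0 2 := by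
    intro x hx
    simp only [mem_ball_zero_iff]
    exact ⟨by linarith, by linarith [norm_sub_le x h]⟩
  have hw_cont : ContinuousOn w (closedBall 0 (1 + t)) := by
    have hsub : ContinuousOn (fun x => v (x - h)) (closedBall 0 (1 + t)) :=
      hv.continuousOn.comp (by fun_prop) fun x hx => (hmem x (mem_closedBall_zero_iff.1 hx)).2
    exact (hv.continuousOn.mono fun x hx => (hmem x (mem_closedBall_zero_iff.1 hx)).1).sub hsub
  have hw_int : IntegrableOn w (ball 0 1 ∪ ball (0 + h) 1) μ := by
    refine (hw_cont.integrableOn_compact (isCompact_closedBall 0 _)).mono_set ?_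
    refine Set.union_subset (ball_subset_closedBall.trans (closedBall_subset_closedBall ?_))
      ((ball_subset_ball' ?_).trans ball_subset_closedBall)
    · linarith [norm_nonneg h]
    · simp [t]
  set A := ball (0 : E) (1 + t) \ ball 0 (1 - t)
  have hA_fin : μ A < ⊤ := (measure_mono Set.sdiff_subset).trans_lt measure_ball_lt_top
  have hpiece : ∀ S ⊆ A, |∫ x in S, w x ∂μ| ≤ K * t * μ.real A := by
    intro S hS
    have hbound : ∀ x ∈ S, ‖w x‖ ≤ K * t := by
      intro x hx
      have hx' := hmem x (mem_ball_zero_iff.1 (hS hx).1).le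
      simpa [w, dist_eq_norm, ← ht] using hv.dist_le_mul x hx'.1 (x - h) hx'.2
    calc |∫ x in S, w x ∂μ| ≤ K * t * μ.real S :=
          norm_setIntegral_le_of_norm_le_const ((measure_mono hS).trans_lt hA_fin) hbound
      _ ≤ K * t * μ.real A := by
        gcongr
        exact hA_fin.ne
  have hA := measureReal_ball_sdiff_ball_le μ (0 : E) (norm_nonneg h) (by linarith)
  rw [setIntegral_congr_fun measurableSet_ball hsd, setIntegral_ball_comp_add_sub μ w 0 h 1 hw_int,
    zero_add]
  calc _ ≤ |∫ x in ball h 1 \ ball 0 1, w x ∂μ| + |∫ x in ball 0 1 \ ball h 1, w x ∂μ| :=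
        abs_sub _ _
    _ ≤ K * t * μ.real A + K * t * μ.real A :=
        add_le_add (hpiece _ (ball_sdiff_ball_subset (by simp [t]) (by simp [t])))
          (hpiece _ (ball_sdiff_ball_subset (by simp [t]) (by simp [t])))
    _ = 2 * K * t * μ.real A := by ring
    _ ≤ 2 * K * t * (2 * Module.finrank ℝ E * 2 ^ Module.finrank ℝ E * t * μ.real (ball 0 1)) := by
        gcongr
    _ = _ := by ring

theorem tendsto_integral_secondDiff_ball_div_norm_sq {ι : Type*} {l : Filter ι} {v : ι → E → ℝ}
    {h : ι → E} (hh : Tendsto h l (𝓝 0))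
    (hdiff : ∀ᶠ i in l, ∀ x ∈ ball (0 : E) 2, DifferentiableAt ℝ (v i) x)
    (hv : TendstoUniformlyOn (fun i => fderiv ℝ (v i)) 0 l (ball 0 2)) :
    Tendsto (fun i => (∫ x in ball 0 1, secondDiff (v i) (h i) x ∂μ) / ‖h i‖ ^ 2) l (𝓝 0) := by
  rw [Metric.tendsto_nhds]
  intro ε hε
  set C := 4 * Module.finrank ℝ E * 2 ^ Module.finrank ℝ E * μ.real (ball (0 : E) 1)
  obtain ⟨δ, hδ₀, hδ⟩ := exists_pos_mul_lt hε C
  lift δ to ℝ≥0 using hδ₀.le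
  filter_upwards [hh (ball_mem_nhds 0 (by norm_num : (0 : ℝ) < 1 / 2)), hdiff,
    Metric.tendstoUniformlyOn_iff.1 hv δ hδ₀] with i hhi hdi hvi
  have hlip : LipschitzOnWith δ (v i) (ball 0 2) := by
    refine Convex.lipschitzOnWith_of_nnnorm_fderiv_le hdi (fun x hx => ?_) (convex_ball 0 2)
    have := hvi x hx
    rw [Pi.zero_apply, dist_zero_left] at this
    rw [← NNReal.coe_le_coe, coe_nnnorm]
    exact this.le
  have hbound := abs_integral_secondDiff_ball_le μ hlip (mem_ball_zero_iff.1 hhi)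
  rw [Real.dist_eq, sub_zero, abs_div, abs_sq]
  exact (div_le_of_le_mul₀ (sq_nonneg _) (by positivity) (hbound.trans_eq (by ring))).trans_lt hδ

end Haar

theorem secondDiff_half_quadratic {ι : Type*} [Fintype ι] (A : Matrix ι ι ℝ)
    (h x : EuclideanSpace ℝ ι) :
    secondDiff (fun y => (1 / 2) * ∑ i, ∑ j, A i j * y i * y j) h x =
      ∑ i, ∑ j, A i j * h i * h j := by
  simp only [secondDiff, Finset.mul_sum, ← Finset.sum_add_distrib, ← Finset.sum_sub_distrib,
    PiLp.add_apply, PiLp.sub_apply]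
  exact Finset.sum_congr rfl fun i _ => Finset.sum_congr rfl fun j _ => by ring

theorem sum_sum_mul_div_norm_sq_smul {ι : Type*} [Fintype ι] (A : Matrix ι ι ℝ)
    (e : EuclideanSpace ℝ ι) {c : ℝ} (hc : c ≠ 0) :
    (∑ i, ∑ j, A i j * (c • e) i * (c • e) j) / ‖c • e‖ ^ 2 =
      (∑ i, ∑ j, A i j * e i * e j) / ‖e‖ ^ 2 := by
  have hscale :
      ∑ i, ∑ j, A i j * (c • e) i * (c • e) j = c ^ 2 * ∑ i, ∑ j, A i j * e i * e j := by
    simp only [PiLp.smul_apply, smul_eq_mul, Finset.mul_sum]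
    exact Finset.sum_congr rfl fun i _ => Finset.sum_congr rfl fun j _ => by ring
  rw [hscale, norm_smul, mul_pow, Real.norm_eq_abs, sq_abs,
    mul_div_mul_left _ _ (pow_ne_zero 2 hc)]

theorem setIntegral_secondDiff_div_norm_sq_smul {ι : Type*} [Fintype ι] (A : Matrix ι ι ℝ)
    (μ : Measure (EuclideanSpace ℝ ι)) {s : Set (EuclideanSpace ℝ ι)} (hs : μ s ≠ ⊤)
    {Q u : EuclideanSpace ℝ ι → ℝ} (hQ : Q = fun x => (1 / 2) * ∑ i, ∑ j, A i j * x i * x j)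
    (e : EuclideanSpace ℝ ι) {c : ℝ} (hc : c ≠ 0)
    (hint : IntegrableOn (secondDiff (u - Q) (c • e)) s μ) :
    ∫ x in s, secondDiff u (c • e) x / ‖c • e‖ ^ 2 ∂μ =
      (∑ i, ∑ j, A i j * e i * e j) / ‖e‖ ^ 2 * μ.real s +
        (∫ x in s, secondDiff (u - Q) (c • e) x ∂μ) / ‖c • e‖ ^ 2 := by
  set r := (∑ i, ∑ j, A i j * e i * e j) / ‖e‖ ^ 2
  have hpt : ∀ x, secondDiff u (c • e) x / ‖c • e‖ ^ 2 =
      r + secondDiff (u - Q) (c • e) x / ‖c • e‖ ^ 2 := by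
    intro x
    have hsum :
        secondDiff u (c • e) x = secondDiff Q (c • e) x + secondDiff (u - Q) (c • e) x := by
      simp only [secondDiff, Pi.sub_apply]
      ring
    rw [hsum, hQ, secondDiff_half_quadratic, add_div, sum_sum_mul_div_norm_sq_smul A e hc]
  simp_rw [hpt]
  rw [integral_add (integrableOn_const (C := r) hs) (hint.div_const _), setIntegral_const,
    integral_div, smul_eq_mul, mul_comm]

theorem tendstoUniformlyOn_fderiv_sub {E F ι : Type*} [NormedAddCommGroup E] [NormedSpace ℝ E]
    [NormedAddCommGroup F] [NormedSpace ℝ F] {l : Filter ι} {s : Set E} {u : ι → E → F}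
    {Q : E → F} (hu : ∀ᶠ i in l, ∀ x ∈ s, DifferentiableAt ℝ (u i) x) (hQ : Differentiable ℝ Q)
    (h : TendstoUniformlyOn (fun i => fderiv ℝ (u i)) (fderiv ℝ Q) l s) :
    TendstoUniformlyOn (fun i => fderiv ℝ (u i - Q)) 0 l s := by
  rw [Metric.tendstoUniformlyOn_iff] at h ⊢
  intro ε hε
  filter_upwards [h ε hε, hu] with i hi hui x hx
  rw [Pi.zero_apply, dist_zero_left, fderiv_sub (hui x hx) (hQ x), ← dist_eq_norm, dist_comm]
  exact hi x hx

theorem stmt_14_general {n : ℕ} (A : Matrix (Fin n) (Fin n) ℝ)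
    (Q : EuclideanSpace ℝ (Fin n) → ℝ)
    (hQ : ∀ x, Q x = (1/2) * ∑ i, ∑ j, A i j * x i * x j)
    (e : EuclideanSpace ℝ (Fin n))
    (u : ℝ → EuclideanSpace ℝ (Fin n) → ℝ)
    (hdiff : ∀ lam : ℝ, 1 ≤ lam → ∀ x ∈ Metric.ball (0 : EuclideanSpace ℝ (Fin n)) 2,
      DifferentiableAt ℝ (u lam) x)
    (hC1 : TendstoUniformlyOn (fun lam x => fderiv ℝ (u lam) x) (fun x => fderiv ℝ Q x)
      Filter.atTop (Metric.ball (0 : EuclideanSpace ℝ (Fin n)) 2)) :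
    Filter.Tendsto
      (fun lam : ℝ => ∫ x in Metric.ball (0 : EuclideanSpace ℝ (Fin n)) 1,
        (u lam (x + lam⁻¹ • e) + u lam (x - lam⁻¹ • e) - 2 * u lam x) / ‖lam⁻¹ • e‖^2)
      Filter.atTop
      (nhds (((∑ i, ∑ j, A i j * e i * e j) / ‖e‖^2)
        * (volume (Metric.ball (0 : EuclideanSpace ℝ (Fin n)) 1)).toReal)) := by
  have hQ' : Q = fun x => (1 / 2) * ∑ i, ∑ j, A i j * x i * x j := funext hQ
  have hQd : Differentiable ℝ Q := by rw [hQ']; fun_prop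
  have hud : ∀ᶠ lam in atTop, ∀ x ∈ ball 0 2, DifferentiableAt ℝ (u lam) x :=
    (eventually_ge_atTop 1).mono hdiff
  have hvd : ∀ᶠ lam in atTop, ∀ x ∈ ball 0 2, DifferentiableAt ℝ (u lam - Q) x :=
    hud.mono fun lam hlam x hx => (hlam x hx).sub (hQd x)
  have hh : Tendsto (fun lam : ℝ => lam⁻¹ • e) atTop (𝓝 0) := by
    simpa using (tendsto_inv_atTop_zero (𝕜 := ℝ)).smul_const e
  have hrem := tendsto_integral_secondDiff_ball_div_norm_sq volume hh hvd
    (tendstoUniformlyOn_fderiv_sub hud hQd hC1)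
  refine Tendsto.congr' ?_ (by simpa only [add_zero] using tendsto_const_nhds.add hrem)
  filter_upwards [eventually_gt_atTop 0, hvd, hh (ball_mem_nhds 0 one_pos)]
    with lam hlam hvd_lam hh_lam
  have hcont : ContinuousOn (u lam - Q) (ball 0 2) :=
    fun x hx => (hvd_lam x hx).continuousAt.continuousWithinAt
  have hint := integrableOn_secondDiff_ball volume hcont (mem_ball_zero_iff.1 hh_lam)
  exact (setIntegral_secondDiff_div_norm_sq_smul A volume measure_ball_lt_top.ne hQ' e
    (inv_ne_zero hlam.ne') hint).symm

/-- If `u_λ → Q = ½xᵀAx` in `C¹(B₂)`, then the integrals over `B₁` of the second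
incremental quotients in direction `ê = e/λ` converge to `(eᵀAe/‖e‖²)·|B₁|`. -/
theorem stmt_14 {n : ℕ} (A : Matrix (Fin n) (Fin n) ℝ) (hA : A.PosDef)
    (Q : EuclideanSpace ℝ (Fin n) → ℝ)
    (hQ : ∀ x, Q x = (1/2) * ∑ i, ∑ j, A i j * x i * x j)
    (e : EuclideanSpace ℝ (Fin n)) (he : e ≠ 0)
    (u : ℝ → EuclideanSpace ℝ (Fin n) → ℝ)
    (hdiff : ∀ lam : ℝ, 1 ≤ lam → ∀ x ∈ Metric.ball (0 : EuclideanSpace ℝ (Fin n)) 2,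
      DifferentiableAt ℝ (u lam) x)
    (hC0 : TendstoUniformlyOn (fun lam => u lam) Q Filter.atTop
      (Metric.ball (0 : EuclideanSpace ℝ (Fin n)) 2))
    (hC1 : TendstoUniformlyOn (fun lam x => fderiv ℝ (u lam) x) (fun x => fderiv ℝ Q x)
      Filter.atTop (Metric.ball (0 : EuclideanSpace ℝ (Fin n)) 2)) :
    Filter.Tendsto
      (fun lam : ℝ => ∫ x in Metric.ball (0 : EuclideanSpace ℝ (Fin n)) 1,
        (u lam (x + lam⁻¹ • e) + u lam (x - lam⁻¹ • e) - 2 * u lam x) / ‖lam⁻¹ • e‖^2)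
      Filter.atTop
      (nhds (((∑ i, ∑ j, A i j * e i * e j) / ‖e‖^2)
        * (volume (Metric.ball (0 : EuclideanSpace ℝ (Fin n)) 1)).toReal)) :=
  stmt_14_general A Q hQ e u hdiff hC1
end
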